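/- arXiv:1703.07011 — 2 statements merged into one kernel-verified Lean document; each statement's English description precedes it below -/
import Mathlib

section
/- If a Smale space $(X,\phi)$ is irreducible and $X$ is infinite, then $(X,\phi)$ is asymptotically essentially free: for every nonzero $n \in \mathbb{Z}$, the interior of the set $\{x \in X \mid (\phi^n(x), x) \in G_\phi^a\}$ is empty. -/
open scoped Topology

/-- A Smale space: a compact metric space `X` with a homeomorphism `phi`, constants
`eps0 > 0`, `0 < lam0 < 1`, and a bracket map satisfying (SS1) and (SS2). -/
structure SmaleSpace (X : Type*) [MetricSpace X] [CompactSpace X] where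
  phi : X ≃ₜ X
  eps0 : ℝ
  eps0_pos : 0 < eps0
  lam0 : ℝ
  lam0_pos : 0 < lam0
  lam0_lt_one : lam0 < 1
  br : X → X → X
  br_continuousOn :
    ContinuousOn (fun p : X × X => br p.1 p.2) {p : X × X | dist p.1 p.2 < eps0}
  br_self : ∀ x, br x x = x
  br_assoc₁ : ∀ x y z, dist x y < eps0 → dist y z < eps0 → dist x z < eps0 →
      dist (br x y) z < eps0 → dist x (br y z) < eps0 →
      br (br x y) z = br x z
  br_assoc₂ : ∀ x y z, dist x y < eps0 → dist y z < eps0 → dist x z < eps0 →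
      dist (br x y) z < eps0 → dist x (br y z) < eps0 →
      br x (br y z) = br x z
  br_phi : ∀ x y, dist x y < eps0 → dist (phi x) (phi y) < eps0 →
      br (phi x) (phi y) = phi (br x y)
  contract_s : ∀ x, ∀ ε : ℝ, 0 < ε → ε ≤ eps0 → ∀ y z,
      br y x = y → dist x y < ε → br z x = z → dist x z < ε →
      dist (phi y) (phi z) ≤ lam0 * dist y z
  contract_u : ∀ x, ∀ ε : ℝ, 0 < ε → ε ≤ eps0 → ∀ y z,
      br x y = y → dist x y < ε → br x z = z → dist x z < ε →
      dist (phi.symm y) (phi.symm z) ≤ lam0 * dist y z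

namespace SmaleSpace

variable {X : Type*} [MetricSpace X] [CompactSpace X] (S : SmaleSpace X)

/-- the `n`-th power `φ^n` of the homeomorphism, `n ∈ ℤ`. -/
def zp (n : ℤ) (x : X) : X := (S.phi.toEquiv ^ n) x

/-- local stable set `X^s(x, ε)`. -/
def stableSet (x : X) (ε : ℝ) : Set X := {y | S.br y x = y ∧ dist x y < ε}

/-- local unstable set `X^u(x, ε)`. -/
def unstableSet (x : X) (ε : ℝ) : Set X := {y | S.br x y = y ∧ dist x y < ε}

def Gs0 : Set (X × X) := {p | p.2 ∈ S.stableSet p.1 S.eps0}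

def Gu0 : Set (X × X) := {p | p.2 ∈ S.unstableSet p.1 S.eps0}

def GsN (n : ℕ) : Set (X × X) := {p | (S.zp n p.1, S.zp n p.2) ∈ S.Gs0}

def GuN (n : ℕ) : Set (X × X) := {p | (S.zp (-(n : ℤ)) p.1, S.zp (-(n : ℤ)) p.2) ∈ S.Gu0}

def GaN (n : ℕ) : Set (X × X) := S.GsN n ∩ S.GuN n

/-- the stable equivalence relation `G_φ^s`. -/
def Gs : Set (X × X) :=
  {p | Filter.Tendsto (fun n : ℕ => dist (S.zp n p.1) (S.zp n p.2)) Filter.atTop (𝓝 0)}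

/-- the unstable equivalence relation `G_φ^u`. -/
def Gu : Set (X × X) :=
  {p | Filter.Tendsto (fun n : ℕ => dist (S.zp (-(n : ℤ)) p.1) (S.zp (-(n : ℤ)) p.2))
        Filter.atTop (𝓝 0)}

/-- the asymptotic equivalence relation `G_φ^a`. -/
def Ga : Set (X × X) := S.Gs ∩ S.Gu

/-- irreducibility of a Smale space. -/
def Irred : Prop := ∀ U V : Set X, IsOpen U → IsOpen V → U.Nonempty → V.Nonempty →
  ∃ K : ℕ, (S.zp K '' U ∩ V).Nonempty

end SmaleSpace

/-- the cocycle sums `f^n` of a function `f : X → ℤ` along a bijection `φ`. -/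
def birkhoff {X : Type*} (φ : Equiv.Perm X) (f : X → ℤ) (n : ℤ) (x : X) : ℤ :=
  if 0 ≤ n then ∑ i ∈ Finset.range n.toNat, f ((φ ^ (i : ℤ)) x)
  else -∑ i ∈ Finset.range (-n).toNat, f ((φ ^ (n + (i : ℤ))) x)

/-!
A Smale space is expansive. If the forward orbits of `a` and `b` stay close, then so do those
of `a` and `[a, b]`, a point of the local unstable set of `a`; since `φ⁻¹` contracts local
unstable sets, this forces `[a, b] = a`. Time reversal (`φ⁻¹` with the bracket flipped) swaps
stable and unstable sets, so close backward orbits give `[a, b] = b`.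

Suppose `{x | (φⁿ x, x) ∈ G_φ^a}` had interior. By Baire's theorem there are an open `V ≠ ∅`
and a window `m` such that for every `x ∈ V` the orbits of `φⁿ x` and `x` are `δ/2`-close at all
times `|k| ≥ m`. Irreducibility produces `x ∈ V` with `φᴿ x ∈ V` for some `R ≥ 2m`. The two
windows together cover all times, so expansivity gives `φⁿ (φᴿ x) = φᴿ x`. Such points are
dense in `V`, so `φⁿ` fixes `V` pointwise. Expansivity then makes a point of `V` isolated, and
irreducibility makes its finite orbit dense, so `X` is finite.
-/

open Filter Topology

namespace Homeomorph

variable {X : Type*}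

theorem toEquiv_zpow [TopologicalSpace X] (f : X ≃ₜ X) (k : ℤ) :
    (f ^ k).toEquiv = f.toEquiv ^ k :=
  map_zpow ({ toFun := toEquiv, map_one' := rfl, map_mul' := fun _ _ => rfl } :
    (X ≃ₜ X) →* Equiv.Perm X) f k

theorem zpow_apply_eq_self_of_apply_eq_self [TopologicalSpace X] {f : X ≃ₜ X} {x : X}
    (hx : f x = x) (k : ℤ) : (f ^ k) x = x := by
  rw [← coe_toEquiv, toEquiv_zpow]
  exact Equiv.Perm.zpow_apply_eq_self_of_apply_eq_self hx k

theorem zpow_apply_eq_zpow_emod_apply [TopologicalSpace X] {f : X ≃ₜ X} {n : ℤ} {x : X}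
    (hx : (f ^ n) x = x) (k : ℤ) : (f ^ k) x = (f ^ (k % n)) x := by
  conv_lhs => rw [← Int.emod_add_mul_ediv k n, zpow_add, zpow_mul, mul_apply,
    zpow_apply_eq_self_of_apply_eq_self hx]

def IsTopologicallyTransitive [TopologicalSpace X] (f : X ≃ₜ X) : Prop :=
  ∀ U V : Set X, IsOpen U → IsOpen V → U.Nonempty → V.Nonempty →
    ∃ K : ℕ, ((f ^ K) '' U ∩ V).Nonempty

def IsExpansiveWith [MetricSpace X] (f : X ≃ₜ X) (δ : ℝ) : Prop :=
  ∀ x y, (∀ k : ℤ, dist ((f ^ k) x) ((f ^ k) y) < δ) → x = y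

def IsAsymptotic [MetricSpace X] (f : X ≃ₜ X) (x y : X) : Prop :=
  Tendsto (fun j : ℕ => dist ((f ^ (j : ℤ)) x) ((f ^ (j : ℤ)) y)) atTop (𝓝 0) ∧
    Tendsto (fun j : ℕ => dist ((f ^ (-(j : ℤ))) x) ((f ^ (-(j : ℤ))) y)) atTop (𝓝 0)

section Transitive

variable [TopologicalSpace X] {f : X ≃ₜ X}

theorem IsTopologicallyTransitive.exists_zpow_mem (hf : f.IsTopologicallyTransitive)
    {U : Set X} (hU : IsOpen U) (hne : U.Nonempty) (M : ℤ) :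
    ∃ x ∈ U, ∃ R : ℤ, M ≤ R ∧ (f ^ R) x ∈ U := by
  obtain ⟨K, _, ⟨x, hx, rfl⟩, ⟨u, hu, hxu⟩⟩ :=
    hf U ((f ^ (-M)) '' U) hU ((f ^ (-M)).isOpenMap U hU) hne (hne.image _)
  refine ⟨x, hx, M + K, by omega, ?_⟩
  rwa [zpow_add, mul_apply, zpow_natCast, ← hxu, ← mul_apply, ← zpow_add, add_neg_cancel,
    zpow_zero, one_apply]

theorem IsTopologicallyTransitive.finite_of_isOpen_singleton [T1Space X]
    (hf : f.IsTopologicallyTransitive) {n : ℤ} (hn : n ≠ 0) {w : X} (hw : (f ^ n) w = w)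
    (hopen : IsOpen ({w} : Set X)) : Finite X := by
  set O := (fun k : ℤ => (f ^ k) w) '' Set.Ico 0 |n|
  have hOfin : O.Finite := (Set.finite_Ico _ _).image _
  have hOdense : Dense O := by
    refine dense_iff_inter_open.2 fun U hU hne => ?_
    obtain ⟨K, _, ⟨u, hu, rfl⟩, hw'⟩ := hf U {w} hU hopen hne (Set.singleton_nonempty w)
    refine ⟨u, ⟨hu, -(K : ℤ) % n, ⟨Int.emod_nonneg _ hn, Int.emod_lt_abs _ hn⟩, ?_⟩⟩
    change (f ^ (-(K : ℤ) % n)) w = u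
    rw [← zpow_apply_eq_zpow_emod_apply hw, ← (hw' : (f ^ K) u = w), ← zpow_natCast,
      ← mul_apply, ← zpow_add, neg_add_cancel, zpow_zero, one_apply]
  rw [← Set.finite_univ_iff, ← hOdense.closure_eq, hOfin.isClosed.closure_eq]
  exact hOfin

end Transitive

section Expansive

variable [MetricSpace X] {f : X ≃ₜ X} {δ : ℝ}

def closeBeyond (f : X ≃ₜ X) (n : ℤ) (ε : ℝ) (m : ℕ) : Set X :=
  {x | ∀ k : ℤ, m ≤ |k| → dist ((f ^ k) ((f ^ n) x)) ((f ^ k) x) ≤ ε}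

theorem isClosed_closeBeyond (f : X ≃ₜ X) (n : ℤ) (ε : ℝ) (m : ℕ) :
    IsClosed (f.closeBeyond n ε m) := by
  simp only [closeBeyond, Set.ofPred_forall]
  exact isClosed_iInter fun k => isClosed_iInter fun _ =>
    isClosed_le (((f ^ k).continuous.comp (f ^ n).continuous).dist (f ^ k).continuous)
      continuous_const

theorem IsAsymptotic.exists_mem_closeBeyond {n : ℤ} {x : X} (h : f.IsAsymptotic ((f ^ n) x) x)
    {ε : ℝ} (hε : 0 < ε) : ∃ m, x ∈ f.closeBeyond n ε m := by
  obtain ⟨m₁, hm₁⟩ := eventually_atTop.1 (h.1.eventually (ge_mem_nhds hε))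
  obtain ⟨m₂, hm₂⟩ := eventually_atTop.1 (h.2.eventually (ge_mem_nhds hε))
  refine ⟨max m₁ m₂, fun k hk => ?_⟩
  obtain ⟨j, rfl | rfl⟩ := Int.eq_nat_or_neg k <;> simp only [abs_neg, Nat.abs_cast] at hk
  · exact hm₁ j (by omega)
  · exact hm₂ j (by omega)

theorem IsExpansiveWith.apply_eq_self_of_mem_closeBeyond {ε : ℝ} (hf : f.IsExpansiveWith δ)
    (hε : ε < δ) {n : ℤ} {m : ℕ} {x : X} {R : ℤ} (hR : 2 * m ≤ R)
    (hx : x ∈ f.closeBeyond n ε m) (hRx : (f ^ R) x ∈ f.closeBeyond n ε m) :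
    (f ^ n) ((f ^ R) x) = (f ^ R) x := by
  refine hf _ _ fun k => lt_of_le_of_lt ?_ hε
  rcases le_or_gt (m : ℤ) |k| with hk | hk
  · exact hRx k hk
  · -- at times `|k| < m` the orbit of `(f ^ R) x` is the orbit of `x` at times `k + R ≥ m`
    have hshift : ∀ y, (f ^ k) ((f ^ R) y) = (f ^ (k + R)) y := fun y => by
      rw [zpow_add, mul_apply]
    have hcomm : (f ^ n) ((f ^ R) x) = (f ^ R) ((f ^ n) x) := by
      rw [← mul_apply, ← zpow_add, add_comm, zpow_add, mul_apply]
    rw [hcomm, hshift, hshift]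
    exact hx _ (by rw [abs_lt] at hk; rw [le_abs]; omega)

theorem IsExpansiveWith.apply_eq_self_of_subset_closeBeyond (hf : f.IsExpansiveWith δ)
    (htrans : f.IsTopologicallyTransitive) {n : ℤ} {ε : ℝ} (hε : ε < δ) {m : ℕ} {V : Set X}
    (hV : IsOpen V) (hsub : V ⊆ f.closeBeyond n ε m) {x : X} (hx : x ∈ V) : (f ^ n) x = x := by
  have hfix : IsClosed {y | (f ^ n) y = y} := isClosed_eq (f ^ n).continuous continuous_id
  refine hfix.closure_subset (mem_closure_iff.2 fun O hO hxO => ?_)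
  obtain ⟨y, ⟨hyO, hyV⟩, R, hR, hRO, hRV⟩ :=
    htrans.exists_zpow_mem (hO.inter hV) ⟨x, hxO, hx⟩ (2 * m)
  exact ⟨_, hRO, hf.apply_eq_self_of_mem_closeBeyond hε hR (hsub hyV) (hsub hRV)⟩

theorem IsExpansiveWith.exists_isOpen_singleton (hf : f.IsExpansiveWith δ) (hδ : 0 < δ)
    {n : ℤ} (hn : n ≠ 0) {V : Set X} (hV : IsOpen V) (hne : V.Nonempty)
    (hfix : ∀ x ∈ V, (f ^ n) x = x) :
    ∃ w, (f ^ n) w = w ∧ IsOpen ({w} : Set X) := by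
  obtain ⟨w, hw⟩ := hne
  set T := V ∩ ⋂ j ∈ Set.Ico 0 |n|, {x | dist ((f ^ j) x) ((f ^ j) w) < δ}
  have hT : T = {w} := by
    refine Set.eq_singleton_iff_unique_mem.2 ⟨⟨hw, Set.mem_iInter₂.2 fun j _ => ?_⟩, ?_⟩
    · simpa using hδ
    · rintro x ⟨hxV, hxT⟩
      refine hf x w fun k => ?_
      rw [zpow_apply_eq_zpow_emod_apply (hfix x hxV), zpow_apply_eq_zpow_emod_apply (hfix w hw)]
      exact Set.mem_iInter₂.1 hxT _ ⟨Int.emod_nonneg _ hn, Int.emod_lt_abs _ hn⟩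
  refine ⟨w, hfix w hw, hT ▸ hV.inter ((Set.finite_Ico _ _).isOpen_biInter fun j _ => ?_)⟩
  exact isOpen_lt ((f ^ j).continuous.dist continuous_const) continuous_const

theorem IsExpansiveWith.interior_setOf_isAsymptotic_eq_empty [BaireSpace X] [Infinite X]
    (hf : f.IsExpansiveWith δ) (hδ : 0 < δ) (htrans : f.IsTopologicallyTransitive) {n : ℤ}
    (hn : n ≠ 0) : interior {x | f.IsAsymptotic ((f ^ n) x) x} = ∅ := by
  by_contra hne
  have hcover : interior {x | f.IsAsymptotic ((f ^ n) x) x} ⊆ ⋃ m, f.closeBeyond n (δ / 2) m :=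
    fun x hx => Set.mem_iUnion.2 ((interior_subset hx).exists_mem_closeBeyond (half_pos hδ))
  obtain ⟨m, hm⟩ : ∃ m, (interior (f.closeBeyond n (δ / 2) m)).Nonempty := by
    by_contra! hempty
    refine not_isMeagre_of_isOpen isOpen_interior (Set.nonempty_iff_ne_empty.2 hne)
      ((isMeagre_iUnion fun m => IsNowhereDense.isMeagre ?_).mono hcover)
    exact (isClosed_closeBeyond f n _ m).isNowhereDense_iff.2 (hempty m)
  obtain ⟨w, hw, hopen⟩ := hf.exists_isOpen_singleton hδ hn isOpen_interior hm fun x hx =>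
    hf.apply_eq_self_of_subset_closeBeyond htrans (half_lt_self hδ) isOpen_interior
      interior_subset hx
  have := htrans.finite_of_isOpen_singleton hn hw hopen
  exact not_finite X

end Expansive

end Homeomorph

namespace SmaleSpace

open Homeomorph

variable {X : Type*} [MetricSpace X] [CompactSpace X] (S : SmaleSpace X)

theorem zp_eq (k : ℤ) : S.zp k = ⇑(S.phi ^ k) := by
  ext x
  rw [zp, ← toEquiv_zpow, coe_toEquiv]

theorem mem_Ga_iff {x y : X} : (x, y) ∈ S.Ga ↔ S.phi.IsAsymptotic x y := by
  simp only [Ga, Gs, Gu, zp_eq, Set.mem_inter_iff, Set.mem_ofPred_eq, IsAsymptotic]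

theorem Irred.isTopologicallyTransitive {S : SmaleSpace X} (h : S.Irred) :
    S.phi.IsTopologicallyTransitive := by
  intro U V hU hV hU' hV'
  obtain ⟨K, hK⟩ := h U V hU hV hU' hV'
  exact ⟨K, by rwa [zp_eq, zpow_natCast] at hK⟩

def reverse : SmaleSpace X where
  phi := S.phi.symm
  eps0 := S.eps0
  eps0_pos := S.eps0_pos
  lam0 := S.lam0
  lam0_pos := S.lam0_pos
  lam0_lt_one := S.lam0_lt_one
  br x y := S.br y x
  br_continuousOn := S.br_continuousOn.comp continuous_swap.continuousOn fun p hp => by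
    simpa [dist_comm] using hp
  br_self := S.br_self
  br_assoc₁ x y z hxy hyz hxz h₁ h₂ := by
    rw [dist_comm] at hxy hyz hxz h₁ h₂
    exact S.br_assoc₂ z y x hyz hxy hxz h₂ h₁
  br_assoc₂ x y z hxy hyz hxz h₁ h₂ := by
    rw [dist_comm] at hxy hyz hxz h₁ h₂
    exact S.br_assoc₁ z y x hyz hxy hxz h₂ h₁
  br_phi x y hxy hφ := by
    rw [dist_comm] at hxy hφ
    rw [eq_symm_apply, ← S.br_phi _ _ hφ (by simpa using hxy), apply_symm_apply,
      apply_symm_apply]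
  contract_s := S.contract_u
  contract_u := S.contract_s

theorem reverse_phi_pow_apply (j : ℕ) (x : X) :
    (S.reverse.phi ^ j) x = (S.phi ^ (-(j : ℤ))) x := by
  rw [zpow_neg, zpow_natCast, ← inv_pow]
  rfl

theorem exists_dist_br_lt {ε : ℝ} (hε : 0 < ε) :
    ∃ d > 0, ∀ x y, dist x y < d → dist (S.br x y) x < ε ∧ dist (S.br x y) y < ε := by
  set K := {p : X × X | dist p.1 p.2 ≤ S.eps0 / 2}
  have hK : IsCompact K := (isClosed_le continuous_dist continuous_const).isCompact
  have hcont : ContinuousOn (fun p : X × X => S.br p.1 p.2) K :=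
    S.br_continuousOn.mono fun p hp => lt_of_le_of_lt hp (half_lt_self S.eps0_pos)
  obtain ⟨d, hd, hunif⟩ :=
    Metric.uniformContinuousOn_iff.1 (hK.uniformContinuousOn_of_continuous hcont) ε hε
  refine ⟨min d (S.eps0 / 2), lt_min hd (half_pos S.eps0_pos), fun x y hxy => ?_⟩
  have hxyK : (x, y) ∈ K := (lt_of_lt_of_le hxy (min_le_right _ _)).le
  have hdiag : ∀ z, (z, z) ∈ K := fun z => by simpa [K] using (half_pos S.eps0_pos).le
  have hxyd : dist x y < d := lt_of_lt_of_le hxy (min_le_left _ _)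
  constructor
  · simpa [S.br_self] using
      hunif _ hxyK _ (hdiag x) (by simpa [Prod.dist_eq, dist_comm] using hxyd)
  · simpa [S.br_self] using hunif _ hxyK _ (hdiag y) (by simpa [Prod.dist_eq] using hxyd)

theorem br_pow_apply {x y : X} (h : ∀ j : ℕ, dist ((S.phi ^ j) x) ((S.phi ^ j) y) < S.eps0)
    (j : ℕ) : S.br ((S.phi ^ j) x) ((S.phi ^ j) y) = (S.phi ^ j) (S.br x y) := by
  induction j with
  | zero => simp
  | succ j ih =>
    have hsucc := h (j + 1)
    rw [pow_succ', mul_apply, mul_apply] at hsucc ⊢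
    rw [S.br_phi _ _ (h j) hsucc, ih, mul_apply]

theorem eq_of_br_eq_of_forall_dist_lt {x y : X} (hxy : S.br x y = y)
    (h : ∀ j : ℕ, dist ((S.phi ^ j) x) ((S.phi ^ j) y) < S.eps0) : x = y := by
  set D := fun j : ℕ => dist ((S.phi ^ j) x) ((S.phi ^ j) y)
  have hstep : ∀ j, D j ≤ S.lam0 * D (j + 1) := fun j => by
    have := S.contract_u ((S.phi ^ (j + 1)) x) S.eps0 S.eps0_pos le_rfl _ _ (S.br_self _)
      (by simpa using S.eps0_pos) (by rw [S.br_pow_apply h, hxy]) (h (j + 1))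
    simpa only [D, pow_succ', mul_apply, symm_apply_apply] using this
  have hlam := S.lam0_pos.le
  have hexpand : ∀ j, D 0 ≤ S.lam0 ^ j * D j := fun j => by
    induction j with
    | zero => simp
    | succ j ih =>
      calc D 0 ≤ S.lam0 ^ j * D j := ih
        _ ≤ S.lam0 ^ j * (S.lam0 * D (j + 1)) := by gcongr; exact hstep j
        _ = S.lam0 ^ (j + 1) * D (j + 1) := by ring
  have hlim : Tendsto (fun j : ℕ => S.lam0 ^ j * S.eps0) atTop (𝓝 0) := by
    simpa using (tendsto_pow_atTop_nhds_zero_of_lt_one hlam S.lam0_lt_one).mul_const S.eps0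
  have hD0 : D 0 ≤ 0 :=
    ge_of_tendsto' hlim fun j => (hexpand j).trans (by gcongr; exact (h j).le)
  simpa [D] using hD0

theorem exists_br_eq_left :
    ∃ d > 0, ∀ x y, (∀ j : ℕ, dist ((S.phi ^ j) x) ((S.phi ^ j) y) < d) → S.br x y = x := by
  have hε := S.eps0_pos
  obtain ⟨d, hd, hbr⟩ := S.exists_dist_br_lt (half_pos hε)
  refine ⟨min d (S.eps0 / 2), lt_min hd (half_pos hε), fun x y h => ?_⟩
  have hd' : ∀ j : ℕ, dist ((S.phi ^ j) x) ((S.phi ^ j) y) < d :=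
    fun j => (h j).trans_le (min_le_left _ _)
  have hε' : ∀ j : ℕ, dist ((S.phi ^ j) x) ((S.phi ^ j) y) < S.eps0 :=
    fun j => (h j).trans_le ((min_le_right _ _).trans (half_le_self hε.le))
  have hxy : dist x y < S.eps0 := by simpa using hε' 0
  have hx_br : dist x (S.br x y) < S.eps0 := by
    rw [dist_comm]
    exact (hbr x y (by simpa using hd' 0)).1.trans (half_lt_self hε)
  refine (S.eq_of_br_eq_of_forall_dist_lt ?_ fun j => ?_).symm
  · rw [S.br_assoc₂ x x y (by simpa using hε) hxy hxy (by rwa [S.br_self]) hx_br]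
  · rw [← S.br_pow_apply hε', dist_comm]
    exact (hbr _ _ (hd' j)).1.trans (half_lt_self hε)

theorem exists_isExpansiveWith : ∃ δ > 0, S.phi.IsExpansiveWith δ := by
  obtain ⟨d₁, hd₁, h₁⟩ := S.exists_br_eq_left
  obtain ⟨d₂, hd₂, h₂⟩ := S.reverse.exists_br_eq_left
  refine ⟨min d₁ d₂, lt_min hd₁ hd₂, fun x y h => ?_⟩
  have hx : S.br x y = x := h₁ x y fun j => by
    simpa only [zpow_natCast] using (h j).trans_le (min_le_left _ _)
  have hy : S.br x y = y := h₂ y x fun j => by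
    simpa only [reverse_phi_pow_apply, dist_comm] using (h (-j)).trans_le (min_le_right _ _)
  exact hx.symm.trans hy

end SmaleSpace

/-- if a Smale space `(X,φ)` is irreducible and `X` is infinite, then
`(X,φ)` is asymptotically essentially free: for every `n ≠ 0`, the interior of
`{x ∈ X : (φ^n(x), x) ∈ G_φ^a}` is empty. -/
theorem asymptotically_essentially_free_of_irreducible {X : Type*} [MetricSpace X]
    [CompactSpace X] (S : SmaleSpace X) (hirr : S.Irred) (hinf : Infinite X) :
    ∀ n : ℤ, n ≠ 0 → interior {x : X | (S.zp n x, x) ∈ S.Ga} = ∅ := by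
  intro n hn
  have := hinf
  obtain ⟨δ, hδ, hexp⟩ := S.exists_isExpansiveWith
  simp only [S.mem_Ga_iff, S.zp_eq]
  exact hexp.interior_setOf_isAsymptotic_eq_empty hδ hirr.isTopologicallyTransitive hn
end

section
/- Let $A$ be the $N\times N$ matrix with all entries equal to $1$, and define the inductive limit group $H(A) = \varinjlim (M_N(\mathbb{Z}), T \mapsto ATA)$ with endomorphism $\alpha$ induced by $T \mapsto A^2 T$. Then the map sending the class $[T,k]$ to $\frac{1}{N^{2k-2}} s_N(T) \in \mathbb{Z}[\frac{1}{N^2}]$, where $s_N(T) = \sum_{i,j} t_{ij}$, is a well-defined group isomorphism $H(A) \cong \mathbb{Z}[\frac{1}{N^2}]$ satisfying $\xi \circ \alpha = \xi$; consequently $\alpha = \mathrm{id}$ on $H(A)$. -/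
/-!
Every entry of `ATA` equals `s_N(T)`, so the connecting map sends `T` to `s_N(T) • A` and
multiplies `s_N` by `N²`. Hence `s_N(T) / N^{2k}` is constant along the inductive system, and
since `s_N` separates the multiples of `A`, two classes agree exactly when these numbers agree.
As `A²T` has entry sum `N² s_N(T)`, `ξ ∘ α = ξ`, and injectivity of `ξ` then gives `α = id`.
-/

/-- the `N × N` matrix with all entries `1`. -/
def onesMatrix (N : ℕ) : Matrix (Fin N) (Fin N) ℤ := Matrix.of fun _ _ => 1

/-- the connecting map `T ↦ A T A` of the inductive system defining `H(A)`. -/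
def connMap (N : ℕ) (T : Matrix (Fin N) (Fin N) ℤ) : Matrix (Fin N) (Fin N) ℤ :=
  onesMatrix N * T * onesMatrix N

/-- `s_N(T) = ∑_{i,j} t_{ij}`. -/
def sumEntries (N : ℕ) (T : Matrix (Fin N) (Fin N) ℤ) : ℤ := ∑ i, ∑ j, T i j

/-- the identification relation of the inductive limit
`H(A) = lim (M_N(ℤ), T ↦ ATA)`: `[T,k] = [S,l]` iff the two elements agree at some
common later stage `m`. -/
def indRel (N : ℕ) (p q : Matrix (Fin N) (Fin N) ℤ × ℕ) : Prop :=
  ∃ m : ℕ, p.2 ≤ m ∧ q.2 ≤ m ∧ (connMap N)^[m - p.2] p.1 = (connMap N)^[m - q.2] q.1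

/-- the map `ξ([T,k]) = s_N(T) / N^{2k}` (levels indexed from `0`). -/
noncomputable def xiMap (N : ℕ) (p : Matrix (Fin N) (Fin N) ℤ × ℕ) : ℝ :=
  (sumEntries N p.1 : ℝ) / (N : ℝ) ^ (2 * p.2)

/-- the subgroup `ℤ[1/N²] ⊆ ℝ`. -/
def zInvSq (N : ℕ) : Set ℝ := {x | ∃ (m : ℤ) (k : ℕ), x = (m : ℝ) / (N : ℝ) ^ (2 * k)}

theorem Function.iterate_mem_range_of_ne_zero {α : Type*} (f : α → α) {n : ℕ} (hn : n ≠ 0)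
    (x : α) : f^[n] x ∈ Set.range f := by
  obtain ⟨i, rfl⟩ := Nat.exists_eq_succ_of_ne_zero hn
  exact ⟨f^[i] x, (Function.iterate_succ_apply' f i x).symm⟩

section

variable {N : ℕ}

theorem sumEntries_add (T U : Matrix (Fin N) (Fin N) ℤ) :
    sumEntries N (T + U) = sumEntries N T + sumEntries N U := by
  simp only [sumEntries, Matrix.add_apply, Finset.sum_add_distrib]

theorem sumEntries_smul (c : ℤ) (T : Matrix (Fin N) (Fin N) ℤ) :
    sumEntries N (c • T) = c * sumEntries N T := by
  simp only [sumEntries, Matrix.smul_apply, smul_eq_mul, Finset.mul_sum]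

theorem sumEntries_onesMatrix : sumEntries N (onesMatrix N) = (N : ℤ) ^ 2 := by
  simp [sumEntries, onesMatrix, sq]

theorem sumEntries_onesMatrix_mul (T : Matrix (Fin N) (Fin N) ℤ) :
    sumEntries N (onesMatrix N * T) = N * sumEntries N T := by
  simp only [sumEntries, onesMatrix, Matrix.mul_apply, Matrix.of_apply, one_mul,
    Finset.sum_const, Finset.card_univ, Fintype.card_fin, nsmul_eq_mul]
  rw [Finset.sum_comm]

theorem onesMatrix_mul_self : onesMatrix N * onesMatrix N = (N : ℤ) • onesMatrix N := by
  ext i j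
  simp [onesMatrix, Matrix.mul_apply]

theorem connMap_eq_smul_onesMatrix (T : Matrix (Fin N) (Fin N) ℤ) :
    connMap N T = sumEntries N T • onesMatrix N := by
  ext i j
  simp [connMap, onesMatrix, Matrix.mul_apply, sumEntries, Finset.sum_comm (γ := Fin N)]

theorem sumEntries_connMap (T : Matrix (Fin N) (Fin N) ℤ) :
    sumEntries N (connMap N T) = (N : ℤ) ^ 2 * sumEntries N T := by
  rw [connMap_eq_smul_onesMatrix, sumEntries_smul, sumEntries_onesMatrix, mul_comm]

theorem sumEntries_onesMatrix_mul_onesMatrix_mul (T : Matrix (Fin N) (Fin N) ℤ) :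
    sumEntries N (onesMatrix N * onesMatrix N * T) = (N : ℤ) ^ 2 * sumEntries N T := by
  rw [onesMatrix_mul_self, Matrix.smul_mul, sumEntries_smul, sumEntries_onesMatrix_mul, sq,
    mul_assoc]

/-- The image of `T ↦ ATA` consists of the integer multiples of `A`, which `s_N` tells apart. -/
theorem sumEntries_injOn_range_connMap (hN : N ≠ 0) :
    Set.InjOn (sumEntries N) (Set.range (connMap N)) := by
  rintro _ ⟨T, rfl⟩ _ ⟨U, rfl⟩ h
  rw [sumEntries_connMap, sumEntries_connMap] at h
  rw [connMap_eq_smul_onesMatrix, connMap_eq_smul_onesMatrix,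
    mul_left_cancel₀ (pow_ne_zero 2 (Int.natCast_ne_zero.mpr hN)) h]

theorem xiMap_add (T U : Matrix (Fin N) (Fin N) ℤ) (k : ℕ) :
    xiMap N (T + U, k) = xiMap N (T, k) + xiMap N (U, k) := by
  simp only [xiMap, sumEntries_add, Int.cast_add, add_div]

theorem xiMap_mem_zInvSq (p : Matrix (Fin N) (Fin N) ℤ × ℕ) : xiMap N p ∈ zInvSq N :=
  ⟨sumEntries N p.1, p.2, rfl⟩

theorem xiMap_succ_of_sumEntries_eq (hN : N ≠ 0) {S : Matrix (Fin N) (Fin N) ℤ} {m : ℤ}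
    (h : sumEntries N S = (N : ℤ) ^ 2 * m) (k : ℕ) :
    xiMap N (S, k + 1) = m / (N : ℝ) ^ (2 * k) := by
  have hN' : (N : ℝ) ≠ 0 := Nat.cast_ne_zero.mpr hN
  simp only [xiMap, h, Int.cast_mul, Int.cast_pow, Int.cast_natCast]
  rw [mul_add, mul_one, pow_add]
  field_simp

theorem xiMap_onesMatrix_mul_onesMatrix_mul (hN : N ≠ 0) (T : Matrix (Fin N) (Fin N) ℤ)
    (k : ℕ) : xiMap N (onesMatrix N * onesMatrix N * T, k + 1) = xiMap N (T, k) :=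
  xiMap_succ_of_sumEntries_eq hN (sumEntries_onesMatrix_mul_onesMatrix_mul T) k

theorem xiMap_connMap (hN : N ≠ 0) (T : Matrix (Fin N) (Fin N) ℤ) (k : ℕ) :
    xiMap N (connMap N T, k + 1) = xiMap N (T, k) :=
  xiMap_succ_of_sumEntries_eq hN (sumEntries_connMap T) k

theorem xiMap_connMap_iterate (hN : N ≠ 0) (T : Matrix (Fin N) (Fin N) ℤ) (k n : ℕ) :
    xiMap N ((connMap N)^[n] T, k + n) = xiMap N (T, k) := by
  induction n with
  | zero => rfl
  | succ n ih => rw [Function.iterate_succ_apply', ← add_assoc, xiMap_connMap hN, ih]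

theorem exists_xiMap_eq (hN : N ≠ 0) {x : ℝ} (hx : x ∈ zInvSq N) :
    ∃ p : Matrix (Fin N) (Fin N) ℤ × ℕ, xiMap N p = x := by
  obtain ⟨m, k, rfl⟩ := hx
  refine ⟨(m • onesMatrix N, k + 1), xiMap_succ_of_sumEntries_eq hN ?_ k⟩
  rw [sumEntries_smul, sumEntries_onesMatrix, mul_comm]

theorem sumEntries_eq_of_xiMap_eq {S T : Matrix (Fin N) (Fin N) ℤ} {k : ℕ} (hN : N ≠ 0)
    (h : xiMap N (S, k) = xiMap N (T, k)) : sumEntries N S = sumEntries N T := by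
  have hN' : (N : ℝ) ^ (2 * k) ≠ 0 := pow_ne_zero _ (Nat.cast_ne_zero.mpr hN)
  exact_mod_cast (div_left_inj' hN').mp h

/-- Classes are compared at a level `m` past both; going one step further lands both
representatives in the range of `T ↦ ATA`, where `s_N` is injective. -/
theorem indRel_iff_xiMap_eq (hN : N ≠ 0) (p q : Matrix (Fin N) (Fin N) ℤ × ℕ) :
    indRel N p q ↔ xiMap N p = xiMap N q := by
  obtain ⟨T, a⟩ := p
  obtain ⟨U, b⟩ := q
  have lift : ∀ (S : Matrix (Fin N) (Fin N) ℤ) {c m : ℕ}, c ≤ m →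
      xiMap N ((connMap N)^[m - c] S, m) = xiMap N (S, c) := fun S c m hcm => by
    obtain ⟨n, rfl⟩ := Nat.exists_eq_add_of_le hcm
    rw [Nat.add_sub_cancel_left]
    exact xiMap_connMap_iterate hN S c n
  constructor
  · rintro ⟨m, ha, hb, h⟩
    rw [← lift T ha, ← lift U hb, h]
  · intro h
    have ha : a < max a b + 1 := by omega
    have hb : b < max a b + 1 := by omega
    refine ⟨max a b + 1, ha.le, hb.le, sumEntries_injOn_range_connMap hN
      (Function.iterate_mem_range_of_ne_zero _ (by omega) T)
      (Function.iterate_mem_range_of_ne_zero _ (by omega) U) ?_⟩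
    exact sumEntries_eq_of_xiMap_eq hN ((lift T ha.le).trans (h.trans (lift U hb.le).symm))

end

/-- for the all-ones `N × N` matrix `A`, the map `[T,k] ↦ s_N(T)/N^{2k}`
is a well-defined group isomorphism of the inductive limit `H(A)` onto `ℤ[1/N²]`
intertwining the endomorphism `α : [T,k] ↦ [A²T, k+1]` with the identity;
consequently `α = id` on `H(A)`.  (Stated on representatives: well-definedness,
injectivity and surjectivity on classes, additivity, `ξ ∘ α = ξ`, and
`α([T,k]) = [T,k]` in `H(A)`.) -/
theorem HA_iso_zInvSq (N : ℕ) (hN : 2 ≤ N) :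
    (∀ p q : Matrix (Fin N) (Fin N) ℤ × ℕ, indRel N p q → xiMap N p = xiMap N q) ∧
    (∀ p q : Matrix (Fin N) (Fin N) ℤ × ℕ, xiMap N p = xiMap N q → indRel N p q) ∧
    (∀ p : Matrix (Fin N) (Fin N) ℤ × ℕ, xiMap N p ∈ zInvSq N) ∧
    (∀ x ∈ zInvSq N, ∃ p : Matrix (Fin N) (Fin N) ℤ × ℕ, xiMap N p = x) ∧
    (∀ (T U : Matrix (Fin N) (Fin N) ℤ) (k : ℕ),
        xiMap N (T + U, k) = xiMap N (T, k) + xiMap N (U, k)) ∧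
    (∀ (T : Matrix (Fin N) (Fin N) ℤ) (k : ℕ),
        xiMap N (onesMatrix N * onesMatrix N * T, k + 1) = xiMap N (T, k)) ∧
    (∀ (T : Matrix (Fin N) (Fin N) ℤ) (k : ℕ),
        indRel N (onesMatrix N * onesMatrix N * T, k + 1) (T, k)) := by
  have hN0 : N ≠ 0 := by omega
  exact ⟨fun p q => (indRel_iff_xiMap_eq hN0 p q).mp,
    fun p q => (indRel_iff_xiMap_eq hN0 p q).mpr,
    xiMap_mem_zInvSq,
    fun _ => exists_xiMap_eq hN0,
    xiMap_add,
    xiMap_onesMatrix_mul_onesMatrix_mul hN0,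
    fun T k => (indRel_iff_xiMap_eq hN0 _ _).mpr (xiMap_onesMatrix_mul_onesMatrix_mul hN0 T k)⟩
end
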